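/- In the above setting with a = 0 and tr A = 0 (strongly unimodular case), the Hermitian structure is never Kähler, and it is SKT if and only if A is skew-symmetric with respect to g (i.e., A + Aᵗ = 0, so A ∈ u(k₁, J, g)) and η ∧ η = 0. -/

import Mathlib

/-!
With `a = 0` one computes `dω = e²ⁿ ∧ φ` with `φ = η - ⟪J (A + Aᵗ) ·, ·⟫` on `k₁`, so that
`J dω = -e¹ ∧ φ`, whose differential is `-(η ∧ φ + (e¹ ∧ e²ⁿ) ∧ A·φ)` with
`A·φ = φ (A ·) · + φ · (A ·)`. Both the Kähler and the SKT condition force `A·φ = 0`. As `A·η = 0`,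
this says `S A + Aᵗ S = 0` for the symmetric `S = A + Aᵗ`; then `S² = A S - S A` has trace zero,
so `S = 0`. Hence `φ = η`, which rules out `dω = 0` and reduces the SKT condition to `η ∧ η = 0`.
-/

open scoped RealInnerProductSpace

namespace LinearMap

section RCLike

variable {𝕜 E : Type*} [RCLike 𝕜] [NormedAddCommGroup E] [InnerProductSpace 𝕜 E]
  [FiniteDimensional 𝕜 E]

lemma eq_zero_of_trace_adjoint_comp_self_eq_zero {T : E →ₗ[𝕜] E}
    (hT : trace 𝕜 E (adjoint T ∘ₗ T) = 0) : T = 0 := by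
  let b := stdOrthonormalBasis 𝕜 E
  have hsum : ∑ i, (‖T (b i)‖ ^ 2 : ℝ) = 0 := by
    apply RCLike.ofReal_injective (K := 𝕜)
    rw [RCLike.ofReal_zero, ← hT, trace_eq_sum_inner _ b]
    push_cast
    refine Finset.sum_congr rfl fun i _ => ?_
    rw [Function.comp_apply, adjoint_inner_right, inner_self_eq_norm_sq_to_K]
  have hzero : ∀ i, T (b i) = 0 := fun i => by
    simpa using (Finset.sum_eq_zero_iff_of_nonneg fun i _ => by positivity).mp hsum i
      (Finset.mem_univ i)
  exact b.toBasis.ext fun i => by simpa using hzero i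

end RCLike

variable {E : Type*} [NormedAddCommGroup E] [InnerProductSpace ℝ E] [FiniteDimensional ℝ E]

lemma adjoint_eq_neg_of_add_adjoint_comp {A : E →ₗ[ℝ] E}
    (h : (A + adjoint A) ∘ₗ A + adjoint A ∘ₗ (A + adjoint A) = 0) : adjoint A = -A := by
  set S := A + adjoint A
  have hS : adjoint S = S := by simp [S, add_comm]
  have hcomm : S ∘ₗ S = A ∘ₗ S - S ∘ₗ A := by
    rw [sub_eq_add_neg, ← eq_neg_of_add_eq_zero_right h]
    exact add_comp _ _ _
  have htr : trace ℝ E (adjoint S ∘ₗ S) = 0 := by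
    rw [hS, hcomm, map_sub, trace_comp_comm', sub_self]
  exact eq_neg_of_add_eq_zero_right (eq_zero_of_trace_adjoint_comp_self_eq_zero htr)

end LinearMap

section ComplexStructure

variable {k : Type*} [NormedAddCommGroup k] [InnerProductSpace ℝ k]

lemma inner_apply_left_eq_neg_of_complexStructure {Jk : k →ₗ[ℝ] k}
    (hJk2 : ∀ X, Jk (Jk X) = -X) (hJkorth : ∀ X Y : k, ⟪Jk X, Jk Y⟫ = ⟪X, Y⟫) (X Y : k) :
    ⟪Jk X, Y⟫ = -⟪X, Jk Y⟫ := by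
  rw [← hJkorth, hJk2, inner_neg_left]

variable [FiniteDimensional ℝ k]

lemma adjoint_apply_comm_of_complexStructure {A Jk : k →ₗ[ℝ] k}
    (hJk2 : ∀ X, Jk (Jk X) = -X) (hJkorth : ∀ X Y : k, ⟪Jk X, Jk Y⟫ = ⟪X, Y⟫)
    (hcomm : ∀ X : k, A (Jk X) = Jk (A X)) (X : k) :
    LinearMap.adjoint A (Jk X) = Jk (LinearMap.adjoint A X) := by
  refine ext_inner_right ℝ fun Y => ?_
  rw [LinearMap.adjoint_inner_left, inner_apply_left_eq_neg_of_complexStructure hJk2 hJkorth,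
    ← hcomm, ← LinearMap.adjoint_inner_left,
    inner_apply_left_eq_neg_of_complexStructure hJk2 hJkorth]

end ComplexStructure

section

variable {k : Type*} [NormedAddCommGroup k] [InnerProductSpace ℝ k]
  (A : k →ₗ[ℝ] k) (η : LinearMap.BilinForm ℝ k) (Jk : k →ₗ[ℝ] k)

/-- The 2-form `φ` on `k₁` with `dω = e²ⁿ ∧ φ`. -/
noncomputable def dωForm : LinearMap.BilinForm ℝ k :=
  η - innerₗ k ∘ₗ (Jk ∘ₗ A) + (innerₗ k ∘ₗ (Jk ∘ₗ A)).flip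

variable {A η Jk}

lemma dωForm_apply (X Y : k) : dωForm A η Jk X Y = η X Y - ⟪Jk (A X), Y⟫ + ⟪Jk (A Y), X⟫ :=
  rfl

lemma dωForm_swap (hη_alt : ∀ X Y : k, η X Y = - η Y X) (X Y : k) :
    dωForm A η Jk X Y = -dωForm A η Jk Y X := by
  rw [dωForm_apply, dωForm_apply, hη_alt]
  ring

lemma dωForm_map_complexStructure (hJkorth : ∀ X Y : k, ⟪Jk X, Jk Y⟫ = ⟪X, Y⟫)
    (hcomm : ∀ X : k, A (Jk X) = Jk (A X)) (h11 : ∀ X Y : k, η (Jk X) (Jk Y) = η X Y)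
    (X Y : k) : dωForm A η Jk (Jk X) (Jk Y) = dωForm A η Jk X Y := by
  simp only [dωForm_apply, hcomm, hJkorth, h11]

lemma dω_eq_dωForm {br : (ℝ × k × ℝ) → (ℝ × k × ℝ) → (ℝ × k × ℝ)}
    (hbr : ∀ P Q, br P Q = (-η P.2.1 Q.2.1, P.2.2 • A Q.2.1 - Q.2.2 • A P.2.1, 0))
    {J : (ℝ × k × ℝ) → (ℝ × k × ℝ)} (hJ : ∀ P : ℝ × k × ℝ, J P = (-P.2.2, Jk P.2.1, P.1))
    {g ω : (ℝ × k × ℝ) → (ℝ × k × ℝ) → ℝ}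
    (hg : ∀ P Q : ℝ × k × ℝ, g P Q = P.1 * Q.1 + ⟪P.2.1, Q.2.1⟫ + P.2.2 * Q.2.2)
    (hω : ∀ P Q, ω P Q = g (J P) Q) {dω : (ℝ × k × ℝ) → (ℝ × k × ℝ) → (ℝ × k × ℝ) → ℝ}
    (hdω : ∀ P Q R, dω P Q R = -(ω (br P Q) R) - ω (br R P) Q - ω (br Q R) P)
    (P Q R : ℝ × k × ℝ) :
    dω P Q R = P.2.2 * dωForm A η Jk Q.2.1 R.2.1 + Q.2.2 * dωForm A η Jk R.2.1 P.2.1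
      + R.2.2 * dωForm A η Jk P.2.1 Q.2.1 := by
  simp only [hdω, hω, hJ, hg, hbr, dωForm_apply, map_sub, map_smul, inner_sub_left,
    real_inner_smul_left]
  ring

variable [FiniteDimensional ℝ k]

lemma dωForm_apply_eq_sub_inner (hJk2 : ∀ X, Jk (Jk X) = -X)
    (hJkorth : ∀ X Y : k, ⟪Jk X, Jk Y⟫ = ⟪X, Y⟫) (hcomm : ∀ X : k, A (Jk X) = Jk (A X))
    (X Y : k) : dωForm A η Jk X Y = η X Y - ⟪Jk ((A + LinearMap.adjoint A) X), Y⟫ := by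
  rw [dωForm_apply, LinearMap.add_apply, map_add, inner_add_left,
    ← adjoint_apply_comm_of_complexStructure hJk2 hJkorth hcomm, LinearMap.adjoint_inner_left,
    inner_apply_left_eq_neg_of_complexStructure hJk2 hJkorth X, real_inner_comm X]
  ring

lemma dωForm_eq_of_adjoint_eq_neg (hJk2 : ∀ X, Jk (Jk X) = -X)
    (hJkorth : ∀ X Y : k, ⟪Jk X, Jk Y⟫ = ⟪X, Y⟫) (hcomm : ∀ X : k, A (Jk X) = Jk (A X))
    (hA : LinearMap.adjoint A = -A) : dωForm A η Jk = η := by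
  ext X Y
  simp [dωForm_apply_eq_sub_inner hJk2 hJkorth hcomm, hA]

lemma adjoint_eq_neg_of_dωForm_invariant (hJk2 : ∀ X, Jk (Jk X) = -X)
    (hJkorth : ∀ X Y : k, ⟪Jk X, Jk Y⟫ = ⟪X, Y⟫) (hcomm : ∀ X : k, A (Jk X) = Jk (A X))
    (hη : ∀ X Y, η (A X) Y + η X (A Y) = 0)
    (hφ : ∀ X Y, dωForm A η Jk (A X) Y + dωForm A η Jk X (A Y) = 0) :
    LinearMap.adjoint A = -A := by
  set T := (A + LinearMap.adjoint A) ∘ₗ A + LinearMap.adjoint A ∘ₗ (A + LinearMap.adjoint A)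
  have hT : ∀ Y Z, ⟪Jk (T Y), Z⟫ = 0 := fun Y Z => by
    have h := hφ Y Z
    rw [dωForm_apply_eq_sub_inner hJk2 hJkorth hcomm,
      dωForm_apply_eq_sub_inner hJk2 hJkorth hcomm, ← LinearMap.adjoint_inner_left,
      adjoint_apply_comm_of_complexStructure hJk2 hJkorth hcomm] at h
    simp only [T, LinearMap.add_apply, LinearMap.comp_apply, map_add, inner_add_left] at h ⊢
    linear_combination hη Y Z - h
  have hJT : ∀ Y, Jk (T Y) = 0 := fun Y => inner_self_eq_zero.mp (hT Y _)
  refine LinearMap.adjoint_eq_neg_of_add_adjoint_comp (LinearMap.ext fun Y => ?_)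
  rw [LinearMap.zero_apply, ← neg_eq_zero, ← hJk2, hJT, map_zero]

end

def wedge {M : Type*} (α β : M → M → ℝ) (X Y Z W : M) : ℝ :=
  α X Y * β Z W - α X Z * β Y W + α X W * β Y Z + α Y Z * β X W - α Y W * β X Z + α Z W * β X Y

lemma dσ_eq_neg_wedge {k : Type*} [NormedAddCommGroup k] [InnerProductSpace ℝ k]
    (A : k →ₗ[ℝ] k) (η φ : LinearMap.BilinForm ℝ k) (hφ : ∀ X Y, φ X Y = -φ Y X)
    {br : (ℝ × k × ℝ) → (ℝ × k × ℝ) → (ℝ × k × ℝ)}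
    (hbr : ∀ P Q, br P Q = (-η P.2.1 Q.2.1, P.2.2 • A Q.2.1 - Q.2.2 • A P.2.1, 0))
    {σ : (ℝ × k × ℝ) → (ℝ × k × ℝ) → (ℝ × k × ℝ) → ℝ}
    (hσ : ∀ P Q R, σ P Q R = -(P.1 * φ Q.2.1 R.2.1 + Q.1 * φ R.2.1 P.2.1 + R.1 * φ P.2.1 Q.2.1))
    (P Q R S : ℝ × k × ℝ) :
    -(σ (br P Q) R S) + σ (br P R) Q S - σ (br P S) Q R
        - σ (br Q R) P S + σ (br Q S) P R - σ (br R S) P Q =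
      -(wedge (η · ·) (φ · ·) P.2.1 Q.2.1 R.2.1 S.2.1
        + wedge (fun P Q : ℝ × k × ℝ => P.1 * Q.2.2 - Q.1 * P.2.2)
            (fun P Q => φ (A P.2.1) Q.2.1 + φ P.2.1 (A Q.2.1)) P Q R S) := by
  simp only [hσ, hbr, wedge, map_sub, map_smul, LinearMap.sub_apply, LinearMap.smul_apply,
    smul_eq_mul, hφ _ (A _)]
  ring

theorem stmt_4_general {k : Type*} [NormedAddCommGroup k] [InnerProductSpace ℝ k]
    [FiniteDimensional ℝ k]
    (a : ℝ) (A : k →ₗ[ℝ] k) (η : k →ₗ[ℝ] k →ₗ[ℝ] ℝ) (Jk : k →ₗ[ℝ] k)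
    (ha : a = 0)
    (hη_alt : ∀ X Y : k, η X Y = - η Y X) (hη_ne : η ≠ 0)
    (hJk2 : ∀ X, Jk (Jk X) = -X)
    (hJkorth : ∀ X Y : k, ⟪Jk X, Jk Y⟫ = ⟪X, Y⟫)
    (hcomm : ∀ X : k, A (Jk X) = Jk (A X))
    (h11 : ∀ X Y : k, η (Jk X) (Jk Y) = η X Y)
    (hder : ∀ X Y : k, η (A X) Y + η X (A Y) = a * η X Y)
    (br : (ℝ × k × ℝ) → (ℝ × k × ℝ) → (ℝ × k × ℝ))
    (hbr : ∀ P Q : ℝ × k × ℝ, br P Q =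
      (P.2.2 * (a * Q.1) - Q.2.2 * (a * P.1) - η P.2.1 Q.2.1,
       P.2.2 • A Q.2.1 - Q.2.2 • A P.2.1, 0))
    (J : (ℝ × k × ℝ) → (ℝ × k × ℝ))
    (hJ : ∀ P : ℝ × k × ℝ, J P = (-P.2.2, Jk P.2.1, P.1))
    (g ω : (ℝ × k × ℝ) → (ℝ × k × ℝ) → ℝ)
    (hg : ∀ P Q : ℝ × k × ℝ, g P Q = P.1 * Q.1 + ⟪P.2.1, Q.2.1⟫ + P.2.2 * Q.2.2)
    (hω : ∀ P Q, ω P Q = g (J P) Q)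
    (dω : (ℝ × k × ℝ) → (ℝ × k × ℝ) → (ℝ × k × ℝ) → ℝ)
    (hdω : ∀ P Q R, dω P Q R = -(ω (br P Q) R) - ω (br R P) Q - ω (br Q R) P)
    (σ : (ℝ × k × ℝ) → (ℝ × k × ℝ) → (ℝ × k × ℝ) → ℝ)
    (hσ : ∀ P Q R, σ P Q R = -(dω (J P) (J Q) (J R))) :
    (¬ (∀ P Q R, dω P Q R = 0)) ∧
    ((∀ P Q R S : ℝ × k × ℝ,
        -(σ (br P Q) R S) + σ (br P R) Q S - σ (br P S) Q R
          - σ (br Q R) P S + σ (br Q S) P R - σ (br R S) P Q = 0) ↔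
      (LinearMap.adjoint A = -A ∧
        ∀ X Y Z W : k,
          η X Y * η Z W - η X Z * η Y W + η X W * η Y Z
            + η Y Z * η X W - η Y W * η X Z + η Z W * η X Y = 0)) := by
  subst ha
  have hηA : ∀ X Y, η (A X) Y + η X (A Y) = 0 := by simpa using hder
  have hbr₀ : ∀ P Q : ℝ × k × ℝ,
      br P Q = (-η P.2.1 Q.2.1, P.2.2 • A Q.2.1 - Q.2.2 • A P.2.1, 0) := by simpa using hbr
  have hdω₀ := dω_eq_dωForm hbr₀ hJ hg hω hdω
  have hσ₀ : ∀ P Q R : ℝ × k × ℝ, σ P Q R = -(P.1 * dωForm A η Jk Q.2.1 R.2.1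
      + Q.1 * dωForm A η Jk R.2.1 P.2.1 + R.1 * dωForm A η Jk P.2.1 Q.2.1) := by
    intro P Q R
    simp only [hσ, hdω₀, hJ, dωForm_map_complexStructure hJkorth hcomm h11]
  have hskt := dσ_eq_neg_wedge A η (dωForm A η Jk) (dωForm_swap hη_alt) hbr₀ hσ₀
  have hφη := dωForm_eq_of_adjoint_eq_neg (η := η) hJk2 hJkorth hcomm
  have hAφ := adjoint_eq_neg_of_dωForm_invariant hJk2 hJkorth hcomm hηA
  refine ⟨fun hKähler => hη_ne ?_, fun hSKT => ?_, fun ⟨hA, hηη⟩ P Q R S => ?_⟩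
  · have hφ : dωForm A η Jk = 0 := by
      ext X Y
      simpa [hdω₀] using hKähler (0, X, 0) (0, Y, 0) (0, 0, 1)
    rw [← hφη (hAφ (by simp [hφ])), hφ]
  · have hA := hAφ fun Y Z => by
      simpa [hskt, wedge] using hSKT (0, 0, 1) (0, Y, 0) (0, Z, 0) (1, 0, 0)
    refine ⟨hA, fun X Y Z W => ?_⟩
    have h := hSKT (0, X, 0) (0, Y, 0) (0, Z, 0) (0, W, 0)
    rw [hskt, hφη hA] at h
    simp only [wedge] at h
    linarith
  · rw [hskt, hφη hA]
    simp [wedge, hηA, hηη]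

/-- Strongly unimodular case (`a = 0`, `tr A = 0`): the structure is never Kähler,
and it is SKT iff `A ∈ u(k₁,J,g)` (i.e. `Aᵗ = -A`) and `η ∧ η = 0`. -/
theorem stmt_4 {k : Type*} [NormedAddCommGroup k] [InnerProductSpace ℝ k]
    [FiniteDimensional ℝ k]
    (a : ℝ) (A : k →ₗ[ℝ] k) (η : k →ₗ[ℝ] k →ₗ[ℝ] ℝ) (Jk : k →ₗ[ℝ] k)
    (ha : a = 0) (htrA : LinearMap.trace ℝ k A = 0)
    (hη_alt : ∀ X Y : k, η X Y = - η Y X) (hη_ne : η ≠ 0)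
    (hJk2 : ∀ X, Jk (Jk X) = -X)
    (hJkorth : ∀ X Y : k, ⟪Jk X, Jk Y⟫ = ⟪X, Y⟫)
    (hcomm : ∀ X : k, A (Jk X) = Jk (A X))
    (h11 : ∀ X Y : k, η (Jk X) (Jk Y) = η X Y)
    (hder : ∀ X Y : k, η (A X) Y + η X (A Y) = a * η X Y)
    (br : (ℝ × k × ℝ) → (ℝ × k × ℝ) → (ℝ × k × ℝ))
    (hbr : ∀ P Q : ℝ × k × ℝ, br P Q =
      (P.2.2 * (a * Q.1) - Q.2.2 * (a * P.1) - η P.2.1 Q.2.1,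
       P.2.2 • A Q.2.1 - Q.2.2 • A P.2.1, 0))
    (J : (ℝ × k × ℝ) → (ℝ × k × ℝ))
    (hJ : ∀ P : ℝ × k × ℝ, J P = (-P.2.2, Jk P.2.1, P.1))
    (g ω : (ℝ × k × ℝ) → (ℝ × k × ℝ) → ℝ)
    (hg : ∀ P Q : ℝ × k × ℝ, g P Q = P.1 * Q.1 + ⟪P.2.1, Q.2.1⟫ + P.2.2 * Q.2.2)
    (hω : ∀ P Q, ω P Q = g (J P) Q)
    (dω : (ℝ × k × ℝ) → (ℝ × k × ℝ) → (ℝ × k × ℝ) → ℝ)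
    (hdω : ∀ P Q R, dω P Q R = -(ω (br P Q) R) - ω (br R P) Q - ω (br Q R) P)
    (σ : (ℝ × k × ℝ) → (ℝ × k × ℝ) → (ℝ × k × ℝ) → ℝ)
    (hσ : ∀ P Q R, σ P Q R = -(dω (J P) (J Q) (J R))) :
    (¬ (∀ P Q R, dω P Q R = 0)) ∧
    ((∀ P Q R S : ℝ × k × ℝ,
        -(σ (br P Q) R S) + σ (br P R) Q S - σ (br P S) Q R
          - σ (br Q R) P S + σ (br Q S) P R - σ (br R S) P Q = 0) ↔
      (LinearMap.adjoint A = -A ∧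
        ∀ X Y Z W : k,
          η X Y * η Z W - η X Z * η Y W + η X W * η Y Z
            + η Y Z * η X W - η Y W * η X Z + η Z W * η X Y = 0)) :=
  stmt_4_general a A η Jk ha hη_alt hη_ne hJk2 hJkorth hcomm h11 hder br hbr J hJ g ω hg hω dω hdω σ
    hσ
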